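/- arXiv:1505.07294 — 5 statements merged into one kernel-verified Lean document; each statement's English description precedes it below -/
import Mathlib

section
/- For every n ≥ 4, every proper 3-coloring ψ of the subgraph C_1 ∪ C_2 of the reduced Thomas-Walls graph T'_n that is non-dangerous on C_1 or non-dangerous on C_2 (i.e., ψ(u_1) = ψ(u_3) and ψ(u_2) ≠ ψ(u_4), or ψ(v_1) = ψ(v_3) and ψ(v_2) ≠ ψ(v_4)) extends to a proper 3-coloring of T'_n. -/
open SimpleGraph

/-- Pairs of natural numbers encoding the edges of the Thomas-Walls graph `T_n`.
The recursive construction (T_1 = K_4; T_{m+1} obtained from T_m by deleting the edge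
`a_m b_m`, which lies in two triangles, and adding vertices `x_m, y_m, z_m` with edges
`a_m x_m, b_m y_m, b_m z_m, x_m y_m, x_m z_m, y_m z_m`) is realized explicitly with
vertex `0 = c`, `1 = d`, `3k-1 = a_k`, `3k = b_k`, `3k+1 = x_k`, where `a_{k+1} = y_k`
and `b_{k+1} = z_k`; `T_1` is `K_4` on `{c, d, a_1, b_1}`. -/
def twPairs (n : ℕ) : Set (ℕ × ℕ) :=
  {p | p = (0, 2) ∨ p = (0, 3) ∨ p = (1, 2) ∨ p = (1, 3) ∨ p = (0, 1) ∨
       p = (3 * n - 1, 3 * n) ∨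
       ∃ k, 1 ≤ k ∧ k < n ∧
         (p = (3 * k - 1, 3 * k + 1) ∨ p = (3 * k, 3 * k + 2) ∨ p = (3 * k, 3 * k + 3) ∨
          p = (3 * k + 1, 3 * k + 2) ∨ p = (3 * k + 1, 3 * k + 3))}

/-- The Thomas-Walls graph `T_n` (for `n ≥ 1`), on the `3n + 1` vertices `0, …, 3n`. -/
def thomasWalls (n : ℕ) : SimpleGraph (Fin (3 * n + 1)) :=
  SimpleGraph.fromRel fun i j => ((i : ℕ), (j : ℕ)) ∈ twPairs n

/-- The reduced Thomas-Walls graph `T'_n = T_n − {u₁u₃, v₁v₃}` (for `n ≥ 2`). -/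
def reducedThomasWalls (n : ℕ) : SimpleGraph (Fin (3 * n + 1)) :=
  SimpleGraph.fromRel fun i j =>
    ((i : ℕ), (j : ℕ)) ∈ twPairs n \ ({(0, 1), (3 * n - 1, 3 * n)} : Set (ℕ × ℕ))

/-- The vertex of `T_n` with index `k` (for `k ≤ 3n`). -/
def twV (n k : ℕ) : Fin (3 * n + 1) := ⟨k % (3 * n + 1), Nat.mod_lt _ (by omega)⟩

/-- `u₁ = c`: a vertex of the 4-cycle `C₁ = u₁u₂u₃u₄` of `T_n` with `u₁u₃ ∈ E(T_n)`. -/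
def tw_u1 (n : ℕ) : Fin (3 * n + 1) := twV n 0
/-- `u₂ = a₁`. -/
def tw_u2 (n : ℕ) : Fin (3 * n + 1) := twV n 2
/-- `u₃ = d`. -/
def tw_u3 (n : ℕ) : Fin (3 * n + 1) := twV n 1
/-- `u₄ = b₁`. -/
def tw_u4 (n : ℕ) : Fin (3 * n + 1) := twV n 3
/-- `v₁ = y_{n-1}`: a vertex of the 4-cycle `C₂ = v₁v₂v₃v₄` of `T_n` with `v₁v₃ ∈ E(T_n)`. -/
def tw_v1 (n : ℕ) : Fin (3 * n + 1) := twV n (3 * n - 1)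
/-- `v₂ = x_{n-1}`. -/
def tw_v2 (n : ℕ) : Fin (3 * n + 1) := twV n (3 * n - 2)
/-- `v₃ = z_{n-1}`. -/
def tw_v3 (n : ℕ) : Fin (3 * n + 1) := twV n (3 * n)
/-- `v₄ = b_{n-1}`. -/
def tw_v4 (n : ℕ) : Fin (3 * n + 1) := twV n (3 * n - 3)

/-! Colour `T'_n` level by level, writing `A k, B k, X k` for the colours of `a_k, b_k, x_k`.
Fix a walk `s 1 = ψ u₄, …, s (n-1) = ψ v₄` in `K₃`; it exists because it has `n - 2 ≥ 2` steps.
If `ψ v₂ ≠ ψ v₄`, give `a_k` and `b_k` the colour `s k` for `1 < k < n` and `x_k` a colour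
avoiding `a_k` and `a_{k+1}`. If `ψ v₂ = ψ v₄`, then `C₂` is dangerous, so `ψ u₂ ≠ ψ u₄`; give
`b_k` and `x_k` the colour `s k` and `a_k` the third colour besides `s (k-1)` and `s k`. -/

def otherColor (a b : Fin 3) : Fin 3 :=
  if a ≠ 0 ∧ b ≠ 0 then 0 else if a ≠ 1 ∧ b ≠ 1 then 1 else 2

theorem otherColor_ne_left (a b : Fin 3) : otherColor a b ≠ a := by revert a b; decide

theorem otherColor_ne_right (a b : Fin 3) : otherColor a b ≠ b := by revert a b; decide

theorem exists_fin_three_walk {j m : ℕ} (h : j + 2 ≤ m) (a b : Fin 3) :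
    ∃ s : ℕ → Fin 3, s j = a ∧ s m = b ∧ ∀ i, j ≤ i → i < m → s i ≠ s (i + 1) := by
  induction m, h using Nat.le_induction generalizing b with
  | base =>
    refine ⟨fun i => if i = j then a else if i = j + 2 then b else otherColor a b,
      by simp, by simp, fun i hji hi => ?_⟩
    obtain rfl | rfl : i = j ∨ i = j + 1 := by omega
    · simpa using (otherColor_ne_left a b).symm
    · simpa [show j + 1 + 1 ≠ j by omega] using otherColor_ne_right a b
  | succ m hm ih =>
    obtain ⟨s, hsj, hsm, hs⟩ := ih (otherColor b b)
    refine ⟨fun i => if i = m + 1 then b else s i, by simp [hsj]; omega, by simp,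
      fun i hji hi => ?_⟩
    rcases Nat.lt_succ_iff_lt_or_eq.mp hi with hi | rfl
    · simpa [show i ≠ m + 1 by omega, show i ≠ m by omega] using hs i hji hi
    · simpa [hsm] using otherColor_ne_left b b

def levelColoring (c d : Fin 3) (A B X : ℕ → Fin 3) (i : ℕ) : Fin 3 :=
  if i = 0 then c else if i = 1 then d else
  if i % 3 = 2 then A ((i + 1) / 3) else if i % 3 = 0 then B (i / 3) else X ((i - 1) / 3)

section levelColoring

variable {c d : Fin 3} {A B X : ℕ → Fin 3} {k : ℕ}

theorem levelColoring_three_mul_sub_one (hk : 1 ≤ k) :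
    levelColoring c d A B X (3 * k - 1) = A k := by
  simp [levelColoring, show 3 * k - 1 ≠ 0 by omega, show 3 * k - 1 ≠ 1 by omega,
    show (3 * k - 1) % 3 = 2 by omega, show (3 * k - 1 + 1) / 3 = k by omega]

theorem levelColoring_three_mul (hk : 1 ≤ k) : levelColoring c d A B X (3 * k) = B k := by
  simp [levelColoring, show k ≠ 0 by omega, show 3 * k ≠ 1 by omega]

theorem levelColoring_three_mul_add_one (hk : 1 ≤ k) :
    levelColoring c d A B X (3 * k + 1) = X k := by
  simp [levelColoring, show k ≠ 0 by omega, show (3 * k + 1) % 3 = 1 by omega]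

end levelColoring

/-- `A k`, `B k`, `X k` colour `a_k`, `b_k`, `x_k`; the conditions are the edges of `T'_n` from
level `k` to level `k + 1`, together with `a_k x_k`. -/
def LevelSteps (n : ℕ) (A B X : ℕ → Fin 3) : Prop :=
  ∀ k, 1 ≤ k → k < n →
    A k ≠ X k ∧ B k ≠ A (k + 1) ∧ B k ≠ B (k + 1) ∧ X k ≠ A (k + 1) ∧ X k ≠ B (k + 1)

theorem levelColoring_ne_of_mem_twPairs {n : ℕ} {c d : Fin 3} {A B X : ℕ → Fin 3}
    (hcA : c ≠ A 1) (hcB : c ≠ B 1) (hdA : d ≠ A 1) (hdB : d ≠ B 1)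
    (hsteps : LevelSteps n A B X) {i j : ℕ}
    (hij : (i, j) ∈ twPairs n \ ({(0, 1), (3 * n - 1, 3 * n)} : Set (ℕ × ℕ))) :
    levelColoring c d A B X i ≠ levelColoring c d A B X j := by
  obtain ⟨hmem, hcd, hab⟩ : (i, j) ∈ twPairs n ∧ (i, j) ≠ (0, 1) ∧
      (i, j) ≠ (3 * n - 1, 3 * n) := by simpa [not_or] using hij
  have h2 : levelColoring c d A B X 2 = A 1 := levelColoring_three_mul_sub_one (k := 1) le_rfl
  have h3 : levelColoring c d A B X 3 = B 1 := levelColoring_three_mul (k := 1) le_rfl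
  simp only [twPairs, Set.mem_ofPred_eq] at hmem
  rcases hmem with h | h | h | h | h | h | ⟨k, hk1, hkn, h | h | h | h | h⟩ <;>
    simp only [Prod.mk.injEq] at h <;> obtain ⟨rfl, rfl⟩ := h
  · simpa [h2, levelColoring] using hcA
  · simpa [h3, levelColoring] using hcB
  · simpa [h2, levelColoring] using hdA
  · simpa [h3, levelColoring] using hdB
  · exact absurd rfl hcd
  · exact absurd rfl hab
  all_goals
    obtain ⟨hAX, hBA, hBB, hXA, hXB⟩ := hsteps k hk1 hkn
    simp only [show 3 * k + 2 = 3 * (k + 1) - 1 by omega, show 3 * k + 3 = 3 * (k + 1) by omega,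
      levelColoring_three_mul_sub_one hk1, levelColoring_three_mul hk1,
      levelColoring_three_mul_add_one hk1, levelColoring_three_mul_sub_one (Nat.le_add_left 1 k),
      levelColoring_three_mul (Nat.le_add_left 1 k)]
    assumption

theorem levelColoring_adj_ne {n : ℕ} {c d : Fin 3} {A B X : ℕ → Fin 3}
    (hcA : c ≠ A 1) (hcB : c ≠ B 1) (hdA : d ≠ A 1) (hdB : d ≠ B 1)
    (hsteps : LevelSteps n A B X) {u v : Fin (3 * n + 1)} (huv : (reducedThomasWalls n).Adj u v) :
    levelColoring c d A B X u ≠ levelColoring c d A B X v := by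
  rcases (SimpleGraph.fromRel_adj _ _ _).mp huv |>.2 with h | h
  · exact levelColoring_ne_of_mem_twPairs hcA hcB hdA hdB hsteps h
  · exact (levelColoring_ne_of_mem_twPairs hcA hcB hdA hdB hsteps h).symm

theorem twV_val {n k : ℕ} (hk : k ≤ 3 * n) : (twV n k : ℕ) = k := Nat.mod_eq_of_lt (by omega)

theorem exists_extension_of_levelSteps {n : ℕ} (hn : 2 ≤ n) (ψ : Fin (3 * n + 1) → Fin 3)
    {A B X : ℕ → Fin 3} (hsteps : LevelSteps n A B X)
    (hA1 : A 1 = ψ (tw_u2 n)) (hB1 : B 1 = ψ (tw_u4 n)) (hAn : A n = ψ (tw_v1 n))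
    (hXn : X (n - 1) = ψ (tw_v2 n)) (hBn : B n = ψ (tw_v3 n)) (hBn' : B (n - 1) = ψ (tw_v4 n))
    (h1 : ψ (tw_u1 n) ≠ ψ (tw_u2 n)) (h2 : ψ (tw_u2 n) ≠ ψ (tw_u3 n))
    (h3 : ψ (tw_u3 n) ≠ ψ (tw_u4 n)) (h4 : ψ (tw_u4 n) ≠ ψ (tw_u1 n)) :
    ∃ φ : Fin (3 * n + 1) → Fin 3,
      (∀ a b, (reducedThomasWalls n).Adj a b → φ a ≠ φ b) ∧
      φ (tw_u1 n) = ψ (tw_u1 n) ∧ φ (tw_u2 n) = ψ (tw_u2 n) ∧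
      φ (tw_u3 n) = ψ (tw_u3 n) ∧ φ (tw_u4 n) = ψ (tw_u4 n) ∧
      φ (tw_v1 n) = ψ (tw_v1 n) ∧ φ (tw_v2 n) = ψ (tw_v2 n) ∧
      φ (tw_v3 n) = ψ (tw_v3 n) ∧ φ (tw_v4 n) = ψ (tw_v4 n) := by
  let φ : Fin (3 * n + 1) → Fin 3 := fun v => levelColoring (ψ (tw_u1 n)) (ψ (tw_u3 n)) A B X v
  have hφ : ∀ {k}, k ≤ 3 * n → φ (twV n k) = levelColoring (ψ (tw_u1 n)) (ψ (tw_u3 n)) A B X k :=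
    fun hk => congrArg (levelColoring _ _ A B X) (twV_val hk)
  refine ⟨φ, fun _ _ => levelColoring_adj_ne (hA1 ▸ h1) (hB1 ▸ h4.symm) (hA1 ▸ h2.symm)
    (hB1 ▸ h3) hsteps, ?_, ?_, ?_, ?_, ?_, ?_, ?_, ?_⟩
  · exact hφ (k := 0) (by omega)
  · exact (hφ (k := 2) (by omega)).trans ((levelColoring_three_mul_sub_one le_rfl).trans hA1)
  · exact hφ (k := 1) (by omega)
  · exact (hφ (k := 3) (by omega)).trans ((levelColoring_three_mul le_rfl).trans hB1)
  · exact (hφ (k := 3 * n - 1) (by omega)).trans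
      ((levelColoring_three_mul_sub_one (by omega)).trans hAn)
  · refine (hφ (k := 3 * n - 2) (by omega)).trans ?_
    rw [show 3 * n - 2 = 3 * (n - 1) + 1 by omega, levelColoring_three_mul_add_one (by omega), hXn]
  · exact (hφ (k := 3 * n) le_rfl).trans ((levelColoring_three_mul (by omega)).trans hBn)
  · refine (hφ (k := 3 * n - 3) (by omega)).trans ?_
    rw [show 3 * n - 3 = 3 * (n - 1) by omega, levelColoring_three_mul (by omega), hBn']

theorem exists_levelSteps_of_ne {n : ℕ} (hn : 4 ≤ n) (a₁ b₁ v₁ v₂ v₃ v₄ : Fin 3)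
    (h₁₂ : v₁ ≠ v₂) (h₂₃ : v₂ ≠ v₃) (h₃₄ : v₃ ≠ v₄) (h₄₁ : v₄ ≠ v₁) (h₂₄ : v₂ ≠ v₄) :
    ∃ A B X : ℕ → Fin 3, LevelSteps n A B X ∧ A 1 = a₁ ∧ B 1 = b₁ ∧ A n = v₁ ∧
      X (n - 1) = v₂ ∧ B n = v₃ ∧ B (n - 1) = v₄ := by
  obtain ⟨s, hs1, hsn, hs⟩ := exists_fin_three_walk (j := 1) (m := n - 1) (by omega) b₁ v₄
  let A : ℕ → Fin 3 := fun k => if k = 1 then a₁ else if k = n then v₁ else s k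
  let B : ℕ → Fin 3 := fun k => if k = n then v₃ else s k
  let X : ℕ → Fin 3 := fun k => if k = n - 1 then v₂ else otherColor (A k) (s (k + 1))
  have hA : ∀ k, 2 ≤ k → k < n → A k = s k := fun k hk2 hkn =>
    by simp only [A, if_neg (show k ≠ 1 by omega), if_neg (show k ≠ n by omega)]
  have hB : ∀ k, k < n → B k = s k := fun k hkn => if_neg (show k ≠ n by omega)
  refine ⟨A, B, X, fun k hk1 hkn => ?_, if_pos rfl, (hB 1 (by omega)).trans hs1,
    by simp [A]; omega, if_pos rfl, if_pos rfl, (hB _ (by omega)).trans hsn⟩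
  rw [hB k hkn]
  rcases (show k + 1 < n ∨ k + 1 = n by omega) with hk | hk
  · have hX : X k = otherColor (A k) (s (k + 1)) := if_neg (by omega)
    rw [hA (k + 1) (by omega) hk, hB (k + 1) hk, hX]
    exact ⟨(otherColor_ne_left _ _).symm, hs k hk1 (by omega), hs k hk1 (by omega),
      otherColor_ne_right _ _, otherColor_ne_right _ _⟩
  · have hX : X k = v₂ := if_pos (by omega)
    have hsk : s k = v₄ := by rw [show k = n - 1 by omega, hsn]
    rw [hA k (by omega) hkn, hsk, hX, hk, show A n = v₁ by simp [A]; omega,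
      show B n = v₃ from if_pos rfl]
    exact ⟨h₂₄.symm, h₄₁, h₃₄.symm, h₁₂.symm, h₂₃⟩

theorem exists_levelSteps_of_eq {n : ℕ} (hn : 4 ≤ n) (a₁ b₁ v₁ v₂ v₃ v₄ : Fin 3)
    (hab : a₁ ≠ b₁) (h₃₄ : v₃ ≠ v₄) (h₄₁ : v₄ ≠ v₁) (h₂₄ : v₂ = v₄) :
    ∃ A B X : ℕ → Fin 3, LevelSteps n A B X ∧ A 1 = a₁ ∧ B 1 = b₁ ∧ A n = v₁ ∧
      X (n - 1) = v₂ ∧ B n = v₃ ∧ B (n - 1) = v₄ := by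
  obtain ⟨s, hs1, hsn, hs⟩ := exists_fin_three_walk (j := 1) (m := n - 1) (by omega) b₁ v₄
  let A : ℕ → Fin 3 := fun k =>
    if k = 1 then a₁ else if k = n then v₁ else otherColor (s (k - 1)) (s k)
  let B : ℕ → Fin 3 := fun k => if k = n then v₃ else s k
  have hA : ∀ k, 1 ≤ k → k + 1 < n → A (k + 1) = otherColor (s k) (s (k + 1)) := fun k hk1 hkn =>
    by simp only [A, if_neg (show k + 1 ≠ 1 by omega), if_neg (show k + 1 ≠ n by omega),
      Nat.add_sub_cancel]
  have hB : ∀ k, k < n → B k = s k := fun k hkn => if_neg (show k ≠ n by omega)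
  refine ⟨A, B, s, fun k hk1 hkn => ?_, if_pos rfl, (hB 1 (by omega)).trans hs1,
    by simp [A]; omega, hsn.trans h₂₄.symm, if_pos rfl, (hB _ (by omega)).trans hsn⟩
  have hAX : A k ≠ s k := by
    rcases eq_or_ne k 1 with rfl | hk
    · simpa [A, hs1] using hab
    · obtain ⟨k, rfl⟩ := Nat.exists_eq_add_of_le' hk1
      rw [hA k (by omega) hkn]
      exact otherColor_ne_right _ _
  rw [hB k hkn]
  rcases (show k + 1 < n ∨ k + 1 = n by omega) with hk | hk
  · rw [hA k hk1 hk, hB (k + 1) hk]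
    exact ⟨hAX, (otherColor_ne_left _ _).symm, hs k hk1 (by omega),
      (otherColor_ne_left _ _).symm, hs k hk1 (by omega)⟩
  · have hsk : s k = v₄ := by rw [show k = n - 1 by omega, hsn]
    rw [hk, show A n = v₁ by simp [A]; omega, show B n = v₃ from if_pos rfl, hsk]
    exact ⟨hsk ▸ hAX, h₄₁, h₃₄.symm, h₄₁, h₃₄.symm⟩

/-- For `n ≥ 4`, every proper 3-coloring `ψ` of the subgraph `C₁ ∪ C₂` of the reduced
Thomas-Walls graph `T'_n` that is non-dangerous on `C₁` or on `C₂` extends to a proper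
3-coloring of `T'_n`. -/
theorem reducedThomasWalls_extend_nondangerous (n : ℕ) (hn : 4 ≤ n)
    (ψ : Fin (3 * n + 1) → Fin 3)
    (h1 : ψ (tw_u1 n) ≠ ψ (tw_u2 n)) (h2 : ψ (tw_u2 n) ≠ ψ (tw_u3 n))
    (h3 : ψ (tw_u3 n) ≠ ψ (tw_u4 n)) (h4 : ψ (tw_u4 n) ≠ ψ (tw_u1 n))
    (h5 : ψ (tw_v1 n) ≠ ψ (tw_v2 n)) (h6 : ψ (tw_v2 n) ≠ ψ (tw_v3 n))
    (h7 : ψ (tw_v3 n) ≠ ψ (tw_v4 n)) (h8 : ψ (tw_v4 n) ≠ ψ (tw_v1 n))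
    (hnd : (ψ (tw_u1 n) = ψ (tw_u3 n) ∧ ψ (tw_u2 n) ≠ ψ (tw_u4 n)) ∨
           (ψ (tw_v1 n) = ψ (tw_v3 n) ∧ ψ (tw_v2 n) ≠ ψ (tw_v4 n))) :
    ∃ φ : Fin (3 * n + 1) → Fin 3,
      (∀ a b, (reducedThomasWalls n).Adj a b → φ a ≠ φ b) ∧
      φ (tw_u1 n) = ψ (tw_u1 n) ∧ φ (tw_u2 n) = ψ (tw_u2 n) ∧
      φ (tw_u3 n) = ψ (tw_u3 n) ∧ φ (tw_u4 n) = ψ (tw_u4 n) ∧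
      φ (tw_v1 n) = ψ (tw_v1 n) ∧ φ (tw_v2 n) = ψ (tw_v2 n) ∧
      φ (tw_v3 n) = ψ (tw_v3 n) ∧ φ (tw_v4 n) = ψ (tw_v4 n) := by
  obtain ⟨A, B, X, hsteps, hA1, hB1, hAn, hXn, hBn, hBn'⟩ :
      ∃ A B X : ℕ → Fin 3, LevelSteps n A B X ∧ A 1 = ψ (tw_u2 n) ∧ B 1 = ψ (tw_u4 n) ∧
        A n = ψ (tw_v1 n) ∧ X (n - 1) = ψ (tw_v2 n) ∧ B n = ψ (tw_v3 n) ∧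
        B (n - 1) = ψ (tw_v4 n) := by
    by_cases hv24 : ψ (tw_v2 n) = ψ (tw_v4 n)
    · have hu24 : ψ (tw_u2 n) ≠ ψ (tw_u4 n) := hnd.elim And.right fun h => absurd hv24 h.2
      exact exists_levelSteps_of_eq hn _ _ _ _ _ _ hu24 h7 h8 hv24
    · exact exists_levelSteps_of_ne hn _ _ _ _ _ _ h5 h6 h7 h8 hv24
  exact exists_extension_of_levelSteps (by omega) ψ hsteps hA1 hB1 hAn hXn hBn hBn' h1 h2 h3 h4
end

section
/- For every n ≥ 2, a proper 3-coloring ψ of the 4-cycle C_2 = v_1v_2v_3v_4 extends to a proper 3-coloring of the graph T'_n + u_1u_3 (the reduced Thomas-Walls graph with the interface edge u_1u_3 added back) if and only if ψ(v_1) = ψ(v_3) and ψ(v_2) ≠ ψ(v_4). -/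
open SimpleGraph

/-!
In every proper 3-coloring of `T'_n + u₁u₃` the ends `a_k, b_k` of each deleted edge get the
same color: for `k = 1` because both see the edge `cd`, and inductively because `y_k, z_k` are
adjacent to `b_k` and to `x_k`, whose color differs from that of `a_k`. Hence `v₁ = a_n`,
`v₃ = b_n` get equal colors, and `v₂ = x_{n-1}`, adjacent to `a_{n-1}`, differs from
`v₄ = b_{n-1}`. Conversely, an explicit coloring realizes the pattern `0, 1, 0, 2` on
`v₁, v₂, v₃, v₄`, and any admissible `ψ` is obtained from it by a permutation of the colors.
-/

namespace ThomasWalls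

lemma fin_three_eq_of_ne {a b x y : Fin 3} (hab : a ≠ b) (hxa : x ≠ a) (hxb : x ≠ b)
    (hya : y ≠ a) (hyb : y ≠ b) : x = y := by
  omega

lemma val_twV {n k : ℕ} (hk : k ≤ 3 * n) : (twV n k).val = k :=
  Nat.mod_eq_of_lt (by omega)

lemma lt_and_le_of_mem_twPairs {n i j : ℕ} (hn : 1 ≤ n) (h : (i, j) ∈ twPairs n) :
    i < j ∧ j ≤ 3 * n := by
  simp only [twPairs, Set.mem_ofPred_eq, Prod.ext_iff] at h
  rcases h with h | h | h | h | h | h | ⟨k, hk, hkn, h⟩ <;> omega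

abbrev reducedThomasWallsPlus (n : ℕ) : SimpleGraph (Fin (3 * n + 1)) :=
  reducedThomasWalls n ⊔ fromEdgeSet {s(tw_u1 n, tw_u3 n)}

/-- A proper 3-coloring of `T_n − v₁v₃ = T'_n + u₁u₃`, read on vertex indices. -/
def IsIndexColoring (n : ℕ) (c : ℕ → Fin 3) : Prop :=
  ∀ ⦃i j : ℕ⦄, (i, j) ∈ twPairs n → (i, j) ≠ (3 * n - 1, 3 * n) → c i ≠ c j

lemma adj_twV_of_mem {n i j : ℕ} (hn : 1 ≤ n) (h : (i, j) ∈ twPairs n)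
    (hij : (i, j) ≠ (3 * n - 1, 3 * n)) :
    (reducedThomasWallsPlus n).Adj (twV n i) (twV n j) := by
  obtain ⟨hlt, hle⟩ := lt_and_le_of_mem_twPairs hn h
  have hne : twV n i ≠ twV n j := fun e => by
    have := congrArg Fin.val e
    rw [val_twV (by omega), val_twV hle] at this
    omega
  by_cases h01 : (i, j) = (0, 1)
  · obtain ⟨rfl, rfl⟩ := Prod.ext_iff.mp h01
    exact Or.inr ⟨rfl, hne⟩
  · refine Or.inl ⟨hne, Or.inl ?_⟩
    simp only [val_twV (show i ≤ 3 * n by omega), val_twV hle]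
    simp_all

lemma mem_of_adj {n : ℕ} (hn : 1 ≤ n) {a b : Fin (3 * n + 1)}
    (h : (reducedThomasWallsPlus n).Adj a b) :
    ((a.val, b.val) ∈ twPairs n ∧ (a.val, b.val) ≠ (3 * n - 1, 3 * n)) ∨
      ((b.val, a.val) ∈ twPairs n ∧ (b.val, a.val) ≠ (3 * n - 1, 3 * n)) := by
  rcases h with ⟨-, h | h⟩ | ⟨h, -⟩
  · exact Or.inl ⟨h.1, fun e => h.2 (by simp [e])⟩
  · exact Or.inr ⟨h.1, fun e => h.2 (by simp [e])⟩
  · rw [Sym2.toRel_prop, Set.mem_singleton_iff, Sym2.eq_iff] at h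
    have h01 : ((0 : ℕ), (1 : ℕ)) ∈ twPairs n := by simp [twPairs]
    have hu1 : (tw_u1 n).val = 0 := val_twV (by omega)
    have hu3 : (tw_u3 n).val = 1 := val_twV (by omega)
    rcases h with ⟨rfl, rfl⟩ | ⟨rfl, rfl⟩
    all_goals
      simp only [hu1, hu3]
      simp only [h01, ne_eq, Prod.mk.injEq, true_and]
      omega

lemma isIndexColoring_of_adj_ne {n : ℕ} (hn : 1 ≤ n) {φ : Fin (3 * n + 1) → Fin 3}
    (hφ : ∀ a b, (reducedThomasWallsPlus n).Adj a b → φ a ≠ φ b) :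
    IsIndexColoring n (fun m => φ (twV n m)) :=
  fun _ _ h hij => hφ _ _ (adj_twV_of_mem hn h hij)

namespace IsIndexColoring

variable {n : ℕ} {c : ℕ → Fin 3}

lemma adj_ne (hc : IsIndexColoring n c) (hn : 1 ≤ n) {a b : Fin (3 * n + 1)}
    (h : (reducedThomasWallsPlus n).Adj a b) : c a ≠ c b := by
  rcases mem_of_adj hn h with ⟨hm, hne⟩ | ⟨hm, hne⟩
  · exact hc hm hne
  · exact (hc hm hne).symm

lemma comp_injective (hc : IsIndexColoring n c) {σ : Fin 3 → Fin 3}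
    (hσ : Function.Injective σ) : IsIndexColoring n (σ ∘ c) :=
  fun _ _ h hij => hσ.ne (hc h hij)

lemma k4_ne (hc : IsIndexColoring n c) :
    c 0 ≠ c 1 ∧ c 0 ≠ c 2 ∧ c 0 ≠ c 3 ∧ c 1 ≠ c 2 ∧ c 1 ≠ c 3 := by
  refine ⟨hc ?_ ?_, hc ?_ ?_, hc ?_ ?_, hc ?_ ?_, hc ?_ ?_⟩ <;>
    first | (simp only [ne_eq, Prod.mk.injEq]; omega) | simp [twPairs]

lemma gadget_ne (hc : IsIndexColoring n c) {k : ℕ} (hk : 1 ≤ k) (hkn : k < n) :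
    c (3 * k - 1) ≠ c (3 * k + 1) ∧ c (3 * k) ≠ c (3 * k + 2) ∧ c (3 * k) ≠ c (3 * k + 3) ∧
      c (3 * k + 1) ≠ c (3 * k + 2) ∧ c (3 * k + 1) ≠ c (3 * k + 3) := by
  have hmem : ∀ p, (p = (3 * k - 1, 3 * k + 1) ∨ p = (3 * k, 3 * k + 2) ∨
      p = (3 * k, 3 * k + 3) ∨ p = (3 * k + 1, 3 * k + 2) ∨ p = (3 * k + 1, 3 * k + 3)) →
      p ∈ twPairs n :=
    fun p hp => Or.inr <| Or.inr <| Or.inr <| Or.inr <| Or.inr <| Or.inr ⟨k, hk, hkn, hp⟩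
  refine ⟨hc (hmem _ (by simp)) ?_, hc (hmem _ (by simp)) ?_, hc (hmem _ (by simp)) ?_,
    hc (hmem _ (by simp)) ?_, hc (hmem _ (by simp)) ?_⟩ <;>
    simp only [ne_eq, Prod.mk.injEq] <;> omega

lemma two_eq_three (hc : IsIndexColoring n c) : c 2 = c 3 := by
  obtain ⟨h01, h02, h03, h12, h13⟩ := hc.k4_ne
  exact fin_three_eq_of_ne h01 h02.symm h12.symm h03.symm h13.symm

lemma color_a_eq_color_b (hc : IsIndexColoring n c) :
    ∀ k, 1 ≤ k → k ≤ n → c (3 * k - 1) = c (3 * k)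
  | 0, hk, _ => absurd hk (by omega)
  | 1, _, _ => hc.two_eq_three
  | k + 2, _, hkn => by
    have hab := hc.color_a_eq_color_b (k + 1) (by omega) (by omega)
    obtain ⟨hax, hby, hbz, hxy, hxz⟩ := hc.gadget_ne (k := k + 1) (by omega) (by omega)
    have hyz := fin_three_eq_of_ne (hab ▸ hax) hby.symm hxy.symm hbz.symm hxz.symm
    convert hyz using 2 <;> omega

lemma color_x_ne_color_b (hc : IsIndexColoring n c) (hn : 2 ≤ n) :
    c (3 * n - 2) ≠ c (3 * n - 3) := by
  have hab := hc.color_a_eq_color_b (n - 1) (by omega) (by omega)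
  have hax := (hc.gadget_ne (k := n - 1) (by omega) (by omega)).1
  rw [hab] at hax
  convert hax.symm using 2 <;> omega

end IsIndexColoring

/-- Color `1` on `c` and on every `x_k`; colors `0` and `2` alternate along the levels
`{a_k, b_k}` (with `d` at level `0`), ending with `0` on `a_n = v₁` and `b_n = v₃`. -/
def twColoring (n m : ℕ) : Fin 3 :=
  if m = 0 ∨ (m ≠ 1 ∧ m % 3 = 1) then 1 else if (n + (m + 1) / 3) % 2 = 0 then 0 else 2

lemma isIndexColoring_twColoring (n : ℕ) : IsIndexColoring n (twColoring n) := by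
  intro i j h hij
  simp only [twPairs, Set.mem_ofPred_eq, Prod.ext_iff] at h
  simp only [ne_eq, Prod.ext_iff] at hij
  unfold twColoring
  rcases h with h | h | h | h | h | h | ⟨k, hk, hkn, h | h | h | h | h⟩ <;>
    split_ifs <;> omega

lemma twColoring_tw_v {n : ℕ} (hn : 2 ≤ n) :
    twColoring n (tw_v1 n) = 0 ∧ twColoring n (tw_v2 n) = 1 ∧
      twColoring n (tw_v3 n) = 0 ∧ twColoring n (tw_v4 n) = 2 := by
  simp only [tw_v1, tw_v2, tw_v3, tw_v4]
  rw [val_twV (by omega), val_twV (by omega), val_twV le_rfl, val_twV (by omega)]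
  unfold twColoring
  refine ⟨?_, ?_, ?_, ?_⟩ <;> split_ifs <;> omega

end ThomasWalls

open ThomasWalls in
theorem reducedThomasWalls_plus_extend_iff_general (n : ℕ) (hn : 2 ≤ n)
    (ψ : Fin (3 * n + 1) → Fin 3)
    (h1 : ψ (tw_v1 n) ≠ ψ (tw_v2 n)) (h4 : ψ (tw_v4 n) ≠ ψ (tw_v1 n)) :
    (∃ φ : Fin (3 * n + 1) → Fin 3,
      (∀ a b, (reducedThomasWalls n ⊔
          SimpleGraph.fromEdgeSet {s(tw_u1 n, tw_u3 n)}).Adj a b → φ a ≠ φ b) ∧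
      φ (tw_v1 n) = ψ (tw_v1 n) ∧ φ (tw_v2 n) = ψ (tw_v2 n) ∧
      φ (tw_v3 n) = ψ (tw_v3 n) ∧ φ (tw_v4 n) = ψ (tw_v4 n)) ↔
    (ψ (tw_v1 n) = ψ (tw_v3 n) ∧ ψ (tw_v2 n) ≠ ψ (tw_v4 n)) := by
  constructor
  · rintro ⟨φ, hφ, e1, e2, e3, e4⟩
    have hc := isIndexColoring_of_adj_ne (by omega) hφ
    rw [← e1, ← e2, ← e3, ← e4]
    exact ⟨hc.color_a_eq_color_b n (by omega) le_rfl, hc.color_x_ne_color_b hn⟩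
  · rintro ⟨h13, h24⟩
    let σ : Fin 3 → Fin 3 := ![ψ (tw_v1 n), ψ (tw_v2 n), ψ (tw_v4 n)]
    have hσ : Function.Injective σ := by
      intro a b hab
      fin_cases a <;> fin_cases b <;> simp_all [σ, eq_comm]
    have hc := (isIndexColoring_twColoring n).comp_injective hσ
    obtain ⟨c1, c2, c3, c4⟩ := twColoring_tw_v hn
    refine ⟨fun v => σ (twColoring n v), fun a b hab => hc.adj_ne (by omega) hab, ?_, ?_, ?_, ?_⟩
    all_goals simp [c1, c2, c3, c4, σ, h13]

/-- For `n ≥ 2`, a proper 3-coloring `ψ` of the 4-cycle `C₂ = v₁v₂v₃v₄` extends to a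
proper 3-coloring of `T'_n + u₁u₃` (the reduced Thomas-Walls graph with the interface
edge `u₁u₃` added back) if and only if `ψ(v₁) = ψ(v₃)` and `ψ(v₂) ≠ ψ(v₄)`. -/
theorem reducedThomasWalls_plus_extend_iff (n : ℕ) (hn : 2 ≤ n)
    (ψ : Fin (3 * n + 1) → Fin 3)
    (h1 : ψ (tw_v1 n) ≠ ψ (tw_v2 n)) (h2 : ψ (tw_v2 n) ≠ ψ (tw_v3 n))
    (h3 : ψ (tw_v3 n) ≠ ψ (tw_v4 n)) (h4 : ψ (tw_v4 n) ≠ ψ (tw_v1 n)) :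
    (∃ φ : Fin (3 * n + 1) → Fin 3,
      (∀ a b, (reducedThomasWalls n ⊔
          SimpleGraph.fromEdgeSet {s(tw_u1 n, tw_u3 n)}).Adj a b → φ a ≠ φ b) ∧
      φ (tw_v1 n) = ψ (tw_v1 n) ∧ φ (tw_v2 n) = ψ (tw_v2 n) ∧
      φ (tw_v3 n) = ψ (tw_v3 n) ∧ φ (tw_v4 n) = ψ (tw_v4 n)) ↔
    (ψ (tw_v1 n) = ψ (tw_v3 n) ∧ ψ (tw_v2 n) ≠ ψ (tw_v4 n)) :=
  reducedThomasWalls_plus_extend_iff_general n hn ψ h1 h4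
end

section
/- For every n ≥ 2 and every proper 3-coloring ψ of the 4-cycle C_2 = v_1v_2v_3v_4 with ψ(v_1) = ψ(v_3) and ψ(v_2) ≠ ψ(v_4), there exists a proper 3-coloring φ of the reduced Thomas-Walls graph T'_n extending ψ such that φ(u_1) ≠ φ(u_3). -/
open SimpleGraph

def twColor (n : ℕ) (A B C : Fin 3) (i : ℕ) : Fin 3 :=
  if i = 0 then (if n % 2 = 0 then A else B)
  else if i = 1 then (if n % 2 = 0 then B else C)
  else if i % 3 = 1 then B
  else if i % 3 = 2 then (if (n + (i + 1) / 3) % 2 = 0 then A else C)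
  else (if (n + i / 3) % 2 = 0 then A else C)

lemma twColor_x (n : ℕ) (A B C : Fin 3) (i : ℕ) (h : i % 3 = 1) (h1 : i ≠ 1) :
    twColor n A B C i = B := by
  have h0 : i ≠ 0 := by omega
  simp [twColor, h0, h1, h]

lemma twColor_a (n : ℕ) (A B C : Fin 3) (k : ℕ) (hk : 1 ≤ k) :
    twColor n A B C (3 * k - 1) = if (n + k) % 2 = 0 then A else C := by
  have h0 : 3 * k - 1 ≠ 0 := by omega
  have h1 : 3 * k - 1 ≠ 1 := by omega
  have h2 : (3 * k - 1) % 3 = 2 := by omega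
  have h3 : ¬ ((3 * k - 1) % 3 = 1) := by omega
  have h4 : (3 * k - 1 + 1) / 3 = k := by omega
  simp [twColor, h0, h1, h3, h2, h4]

lemma twColor_b (n : ℕ) (A B C : Fin 3) (k : ℕ) (hk : 1 ≤ k) :
    twColor n A B C (3 * k) = if (n + k) % 2 = 0 then A else C := by
  have h0 : 3 * k ≠ 0 := by omega
  have h1 : 3 * k ≠ 1 := by omega
  have h3 : ¬ ((3 * k) % 3 = 1) := by omega
  have h2 : ¬ ((3 * k) % 3 = 2) := by omega
  have h4 : 3 * k / 3 = k := by omega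
  simp [twColor, h0, h1, h3, h2, h4]

lemma twColor_key (n : ℕ) (hn : 2 ≤ n) (A B C : Fin 3)
    (hAB : A ≠ B) (hBC : B ≠ C) (hAC : A ≠ C)
    (i j : ℕ) (hij : (i, j) ∈ twPairs n)
    (h01 : ¬(i = 0 ∧ j = 1)) (htop : ¬(i = 3 * n - 1 ∧ j = 3 * n)) :
    twColor n A B C i ≠ twColor n A B C j := by
  simp only [twPairs, Set.mem_setOf_eq, Prod.mk.injEq] at hij
  rcases hij with ⟨hi, hj⟩ | ⟨hi, hj⟩ | ⟨hi, hj⟩ | ⟨hi, hj⟩ | ⟨hi, hj⟩ | ⟨hi, hj⟩ |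
    ⟨k, hk1, hk2, ⟨hi, hj⟩ | ⟨hi, hj⟩ | ⟨hi, hj⟩ | ⟨hi, hj⟩ | ⟨hi, hj⟩⟩
  · -- (0,2)
    subst hi; subst hj
    have := twColor_a n A B C 1 le_rfl
    norm_num at this
    rw [this]
    simp only [twColor]
    norm_num
    by_cases hp : n % 2 = 0
    · have hp' : ¬ ((n + 1) % 2 = 0) := by omega
      simp [hp, hp', hAC]
    · have hp' : (n + 1) % 2 = 0 := by omega
      simp [hp, hp', hAB.symm]
  · -- (0,3)
    subst hi; subst hj
    have := twColor_b n A B C 1 le_rfl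
    norm_num at this
    rw [this]
    simp only [twColor]
    norm_num
    by_cases hp : n % 2 = 0
    · have hp' : ¬ ((n + 1) % 2 = 0) := by omega
      simp [hp, hp', hAC]
    · have hp' : (n + 1) % 2 = 0 := by omega
      simp [hp, hp', hAB.symm]
  · -- (1,2)
    subst hi; subst hj
    have := twColor_a n A B C 1 le_rfl
    norm_num at this
    rw [this]
    simp only [twColor]
    norm_num
    by_cases hp : n % 2 = 0
    · have hp' : ¬ ((n + 1) % 2 = 0) := by omega
      simp [hp, hp', hBC]
    · have hp' : (n + 1) % 2 = 0 := by omega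
      simp [hp, hp', hAC.symm]
  · -- (1,3)
    subst hi; subst hj
    have := twColor_b n A B C 1 le_rfl
    norm_num at this
    rw [this]
    simp only [twColor]
    norm_num
    by_cases hp : n % 2 = 0
    · have hp' : ¬ ((n + 1) % 2 = 0) := by omega
      simp [hp, hp', hBC]
    · have hp' : (n + 1) % 2 = 0 := by omega
      simp [hp, hp', hAC.symm]
  · exact absurd ⟨hi, hj⟩ h01
  · exact absurd ⟨hi, hj⟩ htop
  · -- (3k-1, 3k+1)
    subst hi; subst hj
    rw [twColor_a n A B C k hk1, twColor_x n A B C (3 * k + 1) (by omega) (by omega)]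
    split_ifs with h
    · exact hAB
    · exact fun h => hBC h.symm
  · -- (3k, 3k+2) : b_k vs a_{k+1}
    subst hi; subst hj
    have e2 : 3 * k + 2 = 3 * (k + 1) - 1 := by omega
    rw [twColor_b n A B C k hk1, e2, twColor_a n A B C (k + 1) (by omega)]
    by_cases hp : (n + k) % 2 = 0
    · have hp' : ¬ ((n + (k + 1)) % 2 = 0) := by omega
      simp [hp, hp', hAC]
    · have hp' : (n + (k + 1)) % 2 = 0 := by omega
      simp [hp, hp', hAC.symm]
  · -- (3k, 3k+3) : b_k vs b_{k+1}
    subst hi; subst hj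
    have e2 : 3 * k + 3 = 3 * (k + 1) := by omega
    rw [twColor_b n A B C k hk1, e2, twColor_b n A B C (k + 1) (by omega)]
    by_cases hp : (n + k) % 2 = 0
    · have hp' : ¬ ((n + (k + 1)) % 2 = 0) := by omega
      simp [hp, hp', hAC]
    · have hp' : (n + (k + 1)) % 2 = 0 := by omega
      simp [hp, hp', hAC.symm]
  · -- (3k+1, 3k+2)
    subst hi; subst hj
    have e2 : 3 * k + 2 = 3 * (k + 1) - 1 := by omega
    rw [twColor_x n A B C (3 * k + 1) (by omega) (by omega), e2,
      twColor_a n A B C (k + 1) (by omega)]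
    split_ifs with h
    · exact hAB.symm
    · exact hBC
  · -- (3k+1, 3k+3)
    subst hi; subst hj
    have e2 : 3 * k + 3 = 3 * (k + 1) := by omega
    rw [twColor_x n A B C (3 * k + 1) (by omega) (by omega), e2,
      twColor_b n A B C (k + 1) (by omega)]
    split_ifs with h
    · exact hAB.symm
    · exact hBC

/-- For `n ≥ 2` and every proper 3-coloring `ψ` of the 4-cycle `C₂ = v₁v₂v₃v₄` with
`ψ(v₁) = ψ(v₃)` and `ψ(v₂) ≠ ψ(v₄)`, there is a proper 3-coloring `φ` of the reduced
Thomas-Walls graph `T'_n` extending `ψ` such that `φ(u₁) ≠ φ(u₃)`. -/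
theorem reducedThomasWalls_extend_diagonal (n : ℕ) (hn : 2 ≤ n)
    (ψ : Fin (3 * n + 1) → Fin 3)
    (h1 : ψ (tw_v1 n) ≠ ψ (tw_v2 n)) (h2 : ψ (tw_v2 n) ≠ ψ (tw_v3 n))
    (h3 : ψ (tw_v3 n) ≠ ψ (tw_v4 n)) (h4 : ψ (tw_v4 n) ≠ ψ (tw_v1 n))
    (h13 : ψ (tw_v1 n) = ψ (tw_v3 n)) (h24 : ψ (tw_v2 n) ≠ ψ (tw_v4 n)) :
    ∃ φ : Fin (3 * n + 1) → Fin 3,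
      (∀ a b, (reducedThomasWalls n).Adj a b → φ a ≠ φ b) ∧
      φ (tw_v1 n) = ψ (tw_v1 n) ∧ φ (tw_v2 n) = ψ (tw_v2 n) ∧
      φ (tw_v3 n) = ψ (tw_v3 n) ∧ φ (tw_v4 n) = ψ (tw_v4 n) ∧
      φ (tw_u1 n) ≠ φ (tw_u3 n) := by
  set A := ψ (tw_v1 n) with hA
  set B := ψ (tw_v2 n) with hB
  set C := ψ (tw_v4 n) with hC
  have hAB : A ≠ B := h1
  have hBC : B ≠ C := h24
  have hAC : A ≠ C := fun h => h4 h.symm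
  refine ⟨fun v => twColor n A B C v.val, ?_, ?_, ?_, ?_, ?_, ?_⟩
  · intro a b hab
    rw [reducedThomasWalls, SimpleGraph.fromRel_adj] at hab
    obtain ⟨hne, h | h⟩ := hab
    · obtain ⟨hmem, hnot⟩ := h
      simp only [Set.mem_insert_iff, Set.mem_singleton_iff, Prod.mk.injEq, not_or] at hnot
      exact twColor_key n hn A B C hAB hBC hAC _ _ hmem
        (fun h => hnot.1 ⟨h.1, h.2⟩) (fun h => hnot.2 ⟨h.1, h.2⟩)
    · obtain ⟨hmem, hnot⟩ := h
      simp only [Set.mem_insert_iff, Set.mem_singleton_iff, Prod.mk.injEq, not_or] at hnot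
      exact (twColor_key n hn A B C hAB hBC hAC _ _ hmem
        (fun h => hnot.1 ⟨h.1, h.2⟩) (fun h => hnot.2 ⟨h.1, h.2⟩)).symm
  · -- v1 : index 3n-1 = 3*n - 1
    have hv : (tw_v1 n).val = 3 * n - 1 := by
      show (3 * n - 1) % (3 * n + 1) = 3 * n - 1
      rw [Nat.mod_eq_of_lt (by omega)]
    show twColor n A B C (tw_v1 n).val = A
    rw [hv]
    have := twColor_a n A B C n (by omega)
    rw [this]
    have : (n + n) % 2 = 0 := by omega
    simp [this]
  · -- v2 : index 3n-2
    have hv : (tw_v2 n).val = 3 * n - 2 := by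
      show (3 * n - 2) % (3 * n + 1) = 3 * n - 2
      rw [Nat.mod_eq_of_lt (by omega)]
    show twColor n A B C (tw_v2 n).val = B
    rw [hv, twColor_x n A B C (3 * n - 2) (by omega) (by omega)]
  · -- v3 : index 3n
    have hv : (tw_v3 n).val = 3 * n := by
      show (3 * n) % (3 * n + 1) = 3 * n
      rw [Nat.mod_eq_of_lt (by omega)]
    show twColor n A B C (tw_v3 n).val = ψ (tw_v3 n)
    rw [hv, twColor_b n A B C n (by omega)]
    have : (n + n) % 2 = 0 := by omega
    rw [if_pos this, ← h13]
  · -- v4 : index 3n-3 = 3*(n-1)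
    have hv : (tw_v4 n).val = 3 * (n - 1) := by
      show (3 * n - 3) % (3 * n + 1) = 3 * (n - 1)
      rw [Nat.mod_eq_of_lt (by omega)]
      omega
    show twColor n A B C (tw_v4 n).val = C
    rw [hv, twColor_b n A B C (n - 1) (by omega)]
    have : ¬ ((n + (n - 1)) % 2 = 0) := by omega
    rw [if_neg this]
  · -- u1 vs u3
    have hu1 : (tw_u1 n).val = 0 := by
      show 0 % (3 * n + 1) = 0
      simp
    have hu3 : (tw_u3 n).val = 1 := by
      show 1 % (3 * n + 1) = 1
      rw [Nat.mod_eq_of_lt (by omega)]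
    show twColor n A B C (tw_u1 n).val ≠ twColor n A B C (tw_u3 n).val
    rw [hu1, hu3]
    simp only [twColor]
    norm_num
    by_cases hp : n % 2 = 0
    · simp [hp, hAB]
    · simp [hp, hBC]
end

section
/- For every n ≥ 1, the Thomas-Walls graph T_n is not 3-colorable. -/
open SimpleGraph

lemma fin3_aux : ∀ a b c d : Fin 3, a ≠ c → a ≠ d → b ≠ c → b ≠ d → a ≠ b → c = d := by
  decide

lemma twPairs_bound {n : ℕ} (hn : 1 ≤ n) {p : ℕ × ℕ} (hp : p ∈ twPairs n) :
    p.1 < p.2 ∧ p.2 ≤ 3 * n := by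
  simp only [twPairs, Set.mem_setOf_eq] at hp
  rcases hp with h|h|h|h|h|h|⟨k,hk1,hk2,h|h|h|h|h⟩ <;> subst h <;> simp <;> omega

lemma tw_force (n : ℕ) (hn : 1 ≤ n) (f : ℕ → Fin 3)
    (hf : ∀ p : ℕ × ℕ, p ∈ twPairs n → p ≠ (3 * n - 1, 3 * n) → f p.1 ≠ f p.2) :
    f (3 * n - 1) = f (3 * n) := by
  induction n with
  | zero => omega
  | succ m ih =>
    rcases Nat.lt_or_ge m 1 with h1 | hm
    · -- base case: m = 0, so n = 1, K4 minus the edge (2,3)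
      have hm0 : m = 0 := by omega
      subst hm0
      have h02 : f 0 ≠ f 2 := hf (0, 2) (Or.inl rfl) (by simp)
      have h03 : f 0 ≠ f 3 := hf (0, 3) (Or.inr (Or.inl rfl)) (by simp)
      have h12 : f 1 ≠ f 2 := hf (1, 2) (Or.inr (Or.inr (Or.inl rfl))) (by simp)
      have h13 : f 1 ≠ f 3 := hf (1, 3) (Or.inr (Or.inr (Or.inr (Or.inl rfl)))) (by simp)
      have h01 : f 0 ≠ f 1 :=
        hf (0, 1) (Or.inr (Or.inr (Or.inr (Or.inr (Or.inl rfl))))) (by simp)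
      exact fin3_aux (f 0) (f 1) (f 2) (f 3) h02 h03 h12 h13 h01
    · -- inductive step
      have hsub : ∀ p : ℕ × ℕ, p ∈ twPairs m → p ≠ (3 * m - 1, 3 * m) → f p.1 ≠ f p.2 := by
        intro p hp hne
        obtain ⟨hlt, hle⟩ := twPairs_bound hm hp
        apply hf p
        · simp only [twPairs, Set.mem_setOf_eq] at hp ⊢
          rcases hp with h|h|h|h|h|h|⟨k,hk1,hk2,h⟩
          · exact Or.inl h
          · exact Or.inr (Or.inl h)
          · exact Or.inr (Or.inr (Or.inl h))
          · exact Or.inr (Or.inr (Or.inr (Or.inl h)))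
          · exact Or.inr (Or.inr (Or.inr (Or.inr (Or.inl h))))
          · exact absurd h hne
          · exact Or.inr (Or.inr (Or.inr (Or.inr (Or.inr (Or.inr
              ⟨k, hk1, by omega, h⟩)))))
        · simp only [ne_eq, Prod.ext_iff, not_and]
          intro h1 h2
          omega
      have key : f (3 * m - 1) = f (3 * m) := ih hm hsub
      have hmem : ∀ q : ℕ × ℕ,
          (q = (3 * m - 1, 3 * m + 1) ∨ q = (3 * m, 3 * m + 2) ∨ q = (3 * m, 3 * m + 3) ∨
           q = (3 * m + 1, 3 * m + 2) ∨ q = (3 * m + 1, 3 * m + 3)) → q ∈ twPairs (m + 1) := by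
        intro q hq
        exact Or.inr (Or.inr (Or.inr (Or.inr (Or.inr (Or.inr ⟨m, hm, by omega, hq⟩)))))
      have hne : ∀ a b : ℕ, b ≤ 3 * m + 2 → (a, b) ≠ (3 * (m + 1) - 1, 3 * (m + 1)) := by
        intro a b hb
        simp only [ne_eq, Prod.ext_iff, not_and]
        intro _ h2
        omega
      have e1 : f (3 * m - 1) ≠ f (3 * m + 1) :=
        hf (3 * m - 1, 3 * m + 1) (hmem _ (Or.inl rfl)) (hne _ _ (by omega))
      have e2 : f (3 * m) ≠ f (3 * m + 2) :=
        hf (3 * m, 3 * m + 2) (hmem _ (Or.inr (Or.inl rfl))) (hne _ _ (by omega))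
      have e3 : f (3 * m) ≠ f (3 * m + 3) :=
        hf (3 * m, 3 * m + 3) (hmem _ (Or.inr (Or.inr (Or.inl rfl))))
          (by simp only [ne_eq, Prod.ext_iff, not_and]; intro h1 _; omega)
      have e4 : f (3 * m + 1) ≠ f (3 * m + 2) :=
        hf (3 * m + 1, 3 * m + 2) (hmem _ (Or.inr (Or.inr (Or.inr (Or.inl rfl)))))
          (hne _ _ (by omega))
      have e5 : f (3 * m + 1) ≠ f (3 * m + 3) :=
        hf (3 * m + 1, 3 * m + 3) (hmem _ (Or.inr (Or.inr (Or.inr (Or.inr rfl)))))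
          (by simp only [ne_eq, Prod.ext_iff, not_and]; intro h1 _; omega)
      have hgoal : f (3 * m + 2) = f (3 * m + 3) :=
        fin3_aux (f (3 * m)) (f (3 * m + 1)) (f (3 * m + 2)) (f (3 * m + 3))
          e2 e3 e4 e5 (key ▸ e1)
      have h31 : 3 * (m + 1) - 1 = 3 * m + 2 := by omega
      have h32 : 3 * (m + 1) = 3 * m + 3 := by omega
      rw [h31, h32]
      exact hgoal

/-- For every `n ≥ 1`, the Thomas-Walls graph `T_n` is not 3-colorable. -/
theorem thomasWalls_not_three_colorable (n : ℕ) (hn : 1 ≤ n) :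
    ¬ (thomasWalls n).Colorable 3 := by
  rintro ⟨C⟩
  have hval : ∀ k : ℕ, k ≤ 3 * n → ((twV n k : Fin (3 * n + 1)) : ℕ) = k := by
    intro k hk
    simp [twV, Nat.mod_eq_of_lt (by omega : k < 3 * n + 1)]
  have hadj : ∀ p : ℕ × ℕ, p ∈ twPairs n →
      C (twV n p.1) ≠ C (twV n p.2) := by
    intro p hp
    obtain ⟨hlt, hle⟩ := twPairs_bound hn hp
    apply C.valid
    simp only [thomasWalls, fromRel_adj]
    refine ⟨?_, Or.inl ?_⟩
    · intro he
      have := congrArg Fin.val he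
      rw [hval p.1 (by omega), hval p.2 hle] at this
      omega
    · rw [hval p.1 (by omega), hval p.2 hle]
      exact hp
  have h1 := tw_force n hn (fun k => C (twV n k)) (fun p hp _ => hadj p hp)
  exact hadj (3 * n - 1, 3 * n)
    (Or.inr (Or.inr (Or.inr (Or.inr (Or.inr (Or.inl rfl)))))) h1
end

section
/- For every n ≥ 2, the reduced Thomas-Walls graph T'_n is triangle-free. -/
open SimpleGraph

def twD (n a b k : ℕ) : Prop :=
  ((a = 0 ∧ b = 2) ∨ (a = 0 ∧ b = 3) ∨ (a = 1 ∧ b = 2) ∨ (a = 1 ∧ b = 3)) ∨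
  (1 ≤ k ∧ k < n ∧
    ((a = 3 * k - 1 ∧ b = 3 * k + 1) ∨ (a = 3 * k ∧ b = 3 * k + 2) ∨
     (a = 3 * k ∧ b = 3 * k + 3) ∨ (a = 3 * k + 1 ∧ b = 3 * k + 2) ∨
     (a = 3 * k + 1 ∧ b = 3 * k + 3)))

lemma twD_of_adj (n : ℕ) (hn : 2 ≤ n) {i j : Fin (3 * n + 1)}
    (h : (reducedThomasWalls n).Adj i j) :
    ∃ k, twD n i.val j.val k ∨ twD n j.val i.val k := by
  rw [reducedThomasWalls, fromRel_adj] at h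
  obtain ⟨hne, h⟩ := h
  have key : ∀ a b : Fin (3 * n + 1),
      ((a : ℕ), (b : ℕ)) ∈ twPairs n \ ({(0, 1), (3 * n - 1, 3 * n)} : Set (ℕ × ℕ)) →
      ∃ k, twD n a.val b.val k := by
    intro a b hab
    obtain ⟨hmem, hnot⟩ := hab
    simp only [Set.mem_insert_iff, Set.mem_singleton_iff, not_or, Prod.mk.injEq] at hnot
    simp only [twPairs, Set.mem_setOf_eq, Prod.mk.injEq] at hmem
    rcases hmem with h|h|h|h|h|h|⟨k, hk1, hk2, h⟩
    · exact ⟨0, Or.inl (Or.inl ⟨h.1, h.2⟩)⟩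
    · exact ⟨0, Or.inl (Or.inr (Or.inl ⟨h.1, h.2⟩))⟩
    · exact ⟨0, Or.inl (Or.inr (Or.inr (Or.inl ⟨h.1, h.2⟩)))⟩
    · exact ⟨0, Or.inl (Or.inr (Or.inr (Or.inr ⟨h.1, h.2⟩)))⟩
    · exact (hnot.1 ⟨h.1, h.2⟩).elim
    · exact (hnot.2 ⟨h.1, h.2⟩).elim
    · exact ⟨k, Or.inr ⟨hk1, hk2, by tauto⟩⟩
  rcases h with h | h
  · obtain ⟨k, hk⟩ := key _ _ h; exact ⟨k, Or.inl hk⟩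
  · obtain ⟨k, hk⟩ := key _ _ h; exact ⟨k, Or.inr hk⟩

/-- For every `n ≥ 2`, the reduced Thomas-Walls graph `T'_n` is triangle-free. -/
theorem reducedThomasWalls_triangleFree (n : ℕ) (hn : 2 ≤ n) :
    (reducedThomasWalls n).CliqueFree 3 := by
  intro s hs
  obtain ⟨a, b, c, hab, hac, hbc, rfl⟩ := Finset.card_eq_three.mp hs.card_eq
  have h1 := hs.isClique (by simp) (by simp [Finset.mem_insert]) hab
  have h2 := hs.isClique (by simp) (by simp [Finset.mem_insert]) hac
  have h3 := hs.isClique (by simp [Finset.mem_insert]) (by simp [Finset.mem_insert]) hbc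
  obtain ⟨k1, e1⟩ := twD_of_adj n hn h1
  obtain ⟨k2, e2⟩ := twD_of_adj n hn h2
  obtain ⟨k3, e3⟩ := twD_of_adj n hn h3
  simp only [twD] at e1 e2 e3
  have hab' : (a : ℕ) ≠ b := fun h => hab (Fin.ext h)
  have hac' : (a : ℕ) ≠ c := fun h => hac (Fin.ext h)
  have hbc' : (b : ℕ) ≠ c := fun h => hbc (Fin.ext h)
  omega
end
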